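/- Define s₀ = d x⁺(a c + f₂₀ x⁺) + (1/2) f₁₁ x⁺ (1 + ν₁ − (1/2) f₁₁ x⁺) with ν₁ = −bc and λγ = 1. Under the transformation a' = λa − bβ₁γ⁻¹(y⁻)², c' = λc, f₁₁' = λγ f₁₁ − 2dβ₁(y⁻)², d' = dγ², f₂₀' = f₂₀λ² − f₁₁λ²β₁(y⁻)² + dλ²β₁²(y⁻)⁴ + cλ²β₁ y⁻, and x⁺' = x⁺, one has s₀' = s₀ + dβ₁ x⁺ y⁻ (c x⁺ − y⁻). In particular, if c x⁺ = y⁻ then s₀' = s₀. -/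
import Mathlib

/-- Under `a' = λa - bβ₁γ⁻¹(y⁻)², c' = λc, f₁₁' = λγf₁₁ - 2dβ₁(y⁻)², d' = dγ²,
f₂₀' = f₂₀λ² - f₁₁λ²β₁(y⁻)² + dλ²β₁²(y⁻)⁴ + cλ²β₁y⁻, x⁺' = x⁺` (with `λγ = 1`,
`ν₁ = -bc` preserved), one has `s₀' = s₀ + dβ₁x⁺y⁻(cx⁺ - y⁻)`; in particular if
`cx⁺ = y⁻` then `s₀' = s₀`. -/
theorem s0_transformation_second_case
    (lam gam a b c d f20 f11 β₁ xp ym : ℝ) (hlg : lam * gam = 1) :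
    ((d * gam ^ 2) * xp *
        ((lam * a - b * β₁ * gam⁻¹ * ym ^ 2) * (lam * c)
          + (f20 * lam ^ 2 - f11 * lam ^ 2 * β₁ * ym ^ 2
              + d * lam ^ 2 * β₁ ^ 2 * ym ^ 4 + c * lam ^ 2 * β₁ * ym) * xp)
      + (1 / 2) * (lam * gam * f11 - 2 * d * β₁ * ym ^ 2) * xp *
        (1 + (-(b * c)) - (1 / 2) * (lam * gam * f11 - 2 * d * β₁ * ym ^ 2) * xp)
      = (d * xp * (a * c + f20 * xp)
          + (1 / 2) * f11 * xp * (1 + (-(b * c)) - (1 / 2) * f11 * xp))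
        + d * β₁ * xp * ym * (c * xp - ym)) ∧
    (c * xp = ym →
      (d * gam ^ 2) * xp *
          ((lam * a - b * β₁ * gam⁻¹ * ym ^ 2) * (lam * c)
            + (f20 * lam ^ 2 - f11 * lam ^ 2 * β₁ * ym ^ 2
                + d * lam ^ 2 * β₁ ^ 2 * ym ^ 4 + c * lam ^ 2 * β₁ * ym) * xp)
        + (1 / 2) * (lam * gam * f11 - 2 * d * β₁ * ym ^ 2) * xp *
          (1 + (-(b * c)) - (1 / 2) * (lam * gam * f11 - 2 * d * β₁ * ym ^ 2) * xp)
      = d * xp * (a * c + f20 * xp)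
          + (1 / 2) * f11 * xp * (1 + (-(b * c)) - (1 / 2) * f11 * xp)) := by
  have hg : gam ≠ 0 := by rintro rfl; simp at hlg
  have hinv : gam⁻¹ = lam := by field_simp; linarith [hlg]
  have key : (d * gam ^ 2) * xp *
        ((lam * a - b * β₁ * gam⁻¹ * ym ^ 2) * (lam * c)
          + (f20 * lam ^ 2 - f11 * lam ^ 2 * β₁ * ym ^ 2
              + d * lam ^ 2 * β₁ ^ 2 * ym ^ 4 + c * lam ^ 2 * β₁ * ym) * xp)
      + (1 / 2) * (lam * gam * f11 - 2 * d * β₁ * ym ^ 2) * xp *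
        (1 + (-(b * c)) - (1 / 2) * (lam * gam * f11 - 2 * d * β₁ * ym ^ 2) * xp)
      = (d * xp * (a * c + f20 * xp)
          + (1 / 2) * f11 * xp * (1 + (-(b * c)) - (1 / 2) * f11 * xp))
        + d * β₁ * xp * ym * (c * xp - ym) := by
    rw [hinv, hlg]
    linear_combination (lam * gam + 1) *
      (d * xp * (a * c - b * β₁ * c * ym ^ 2
        + (f20 - f11 * β₁ * ym ^ 2 + d * β₁ ^ 2 * ym ^ 4 + c * β₁ * ym) * xp)) * hlg
  refine ⟨key, fun h => ?_⟩
  rw [key, h]; ring
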